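/- Csiszár–Körner sum identity: for any jointly distributed finite random variables W and sequences S_1,...,S_n and Y_1,...,Y_n, the sum over i from 1 to n of I(S^{i-1}; Y_i | W, Y^n_{i+1}) equals the sum over i from 1 to n of I(S_i; Y^n_{i+1} | W, S^{i-1}), where S^{i-1} = (S_1,...,S_{i-1}) and Y^n_{i+1} = (Y_{i+1},...,Y_n). -/

import Mathlib

open Real BigOperators Finset Filter

section InfoTheory

variable {Ω : Type*} [Fintype Ω]

/-- `μ` is a probability mass function on the finite sample space `Ω`. -/
def IsPMF (μ : Ω → ℝ) : Prop := (∀ ω, 0 ≤ μ ω) ∧ ∑ ω, μ ω = 1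

/-- Probability that the random variable `X` takes the value `a`. -/
noncomputable def prob (μ : Ω → ℝ) {α : Type*} [DecidableEq α] (X : Ω → α) (a : α) : ℝ :=
  ∑ ω ∈ Finset.univ.filter (fun ω => X ω = a), μ ω

/-- Shannon entropy (base 2) of a finite-valued random variable. -/
noncomputable def Hent (μ : Ω → ℝ) {α : Type*} [Fintype α] [DecidableEq α] (X : Ω → α) : ℝ :=
  -∑ a : α, prob μ X a * Real.logb 2 (prob μ X a)

/-- Conditional entropy `H(X | Z)`. -/
noncomputable def Hcond (μ : Ω → ℝ) {α β : Type*} [Fintype α] [DecidableEq α]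
    [Fintype β] [DecidableEq β] (X : Ω → α) (Z : Ω → β) : ℝ :=
  Hent μ (fun ω => (X ω, Z ω)) - Hent μ Z

/-- Mutual information `I(X; Y)`. -/
noncomputable def mi (μ : Ω → ℝ) {α β : Type*} [Fintype α] [DecidableEq α]
    [Fintype β] [DecidableEq β] (X : Ω → α) (Y : Ω → β) : ℝ :=
  Hent μ X + Hent μ Y - Hent μ (fun ω => (X ω, Y ω))

/-- Conditional mutual information `I(X; Y | Z)`. -/
noncomputable def cmi (μ : Ω → ℝ) {α β γ : Type*} [Fintype α] [DecidableEq α]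
    [Fintype β] [DecidableEq β] [Fintype γ] [DecidableEq γ]
    (X : Ω → α) (Y : Ω → β) (Z : Ω → γ) : ℝ :=
  Hent μ (fun ω => (X ω, Z ω)) + Hent μ (fun ω => (Y ω, Z ω))
    - Hent μ (fun ω => (X ω, Y ω, Z ω)) - Hent μ Z

/-- Independence of two random variables. -/
def Indep (μ : Ω → ℝ) {α β : Type*} [DecidableEq α] [DecidableEq β]
    (X : Ω → α) (Y : Ω → β) : Prop :=
  ∀ a b, prob μ (fun ω => (X ω, Y ω)) (a, b) = prob μ X a * prob μ Y b

/-- Conditional independence of `X` and `Y` given `Z`. -/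
def CondIndep (μ : Ω → ℝ) {α β γ : Type*} [DecidableEq α] [DecidableEq β] [DecidableEq γ]
    (X : Ω → α) (Y : Ω → β) (Z : Ω → γ) : Prop :=
  ∀ a b c, prob μ (fun ω => (X ω, Y ω, Z ω)) (a, b, c) * prob μ Z c
    = prob μ (fun ω => (X ω, Z ω)) (a, c) * prob μ (fun ω => (Y ω, Z ω)) (b, c)

end InfoTheory

/-- Binary entropy function (base 2). -/
noncomputable def binEnt (x : ℝ) : ℝ := -(x * Real.logb 2 x) - (1 - x) * Real.logb 2 (1 - x)

/-- Binary convolution `p * q = p(1-q) + q(1-p)`. -/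
noncomputable def bconv (p q : ℝ) : ℝ := p * (1 - q) + q * (1 - p)

/-!
Write `F(a, b) = H(W, S_{<a}, Y_{≥b})` (indices from `0`). Expanding each conditional mutual
information into four joint entropies, the `i`-th summand on the left is
`F(i, i+1) + F(0, i) - F(i, i) - F(0, i+1)` and the `i`-th summand on the right is
`F(i+1, n) + F(i, i+1) - F(i+1, i+1) - F(i, n)`. The common term `F(i, i+1)` cancels and the
rest telescopes along the three paths `F(0, ·)`, `F(·, ·)` and `F(·, n)`, whose endpoints agree.
The identification of entropies only uses that the entropy of `X` depends on `X` solely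
through the partition of the sample space into the fibres of `X`.
-/

section Entropy

variable {Ω α β : Type*} [Fintype Ω] (μ : Ω → ℝ)

lemma Hent_eq_neg_sum_mul_logb_prob [Fintype α] [DecidableEq α] (X : Ω → α) :
    Hent μ X = -∑ ω, μ ω * Real.logb 2 (prob μ X (X ω)) := by
  rw [Hent, ← Finset.sum_fiberwise Finset.univ X]
  congr 1
  refine Finset.sum_congr rfl fun a _ => ?_
  rw [Finset.sum_congr rfl fun ω hω => by rw [(Finset.mem_filter.1 hω).2], ← Finset.sum_mul]
  rfl

lemma Hent_congr_of_fibers [Fintype α] [DecidableEq α] [Fintype β] [DecidableEq β]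
    {X : Ω → α} {X' : Ω → β} (h : ∀ ω ω', X ω = X ω' ↔ X' ω = X' ω') :
    Hent μ X = Hent μ X' := by
  simp only [Hent_eq_neg_sum_mul_logb_prob, prob]
  congr 2 with ω
  congr 3 with ω'
  simpa only [Finset.mem_filter, Finset.mem_univ, true_and] using h ω' ω

end Entropy

lemma sum_range_csiszar_korner_telescope (F : ℕ → ℕ → ℝ) (n : ℕ) :
    ∑ i ∈ Finset.range n, (F i (i + 1) + F 0 i - F i i - F 0 (i + 1))
      = ∑ i ∈ Finset.range n, (F (i + 1) n + F i (i + 1) - F (i + 1) (i + 1) - F i n) := by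
  rw [← sub_eq_zero, ← Finset.sum_sub_distrib]
  have hsplit : ∀ i ∈ Finset.range n,
      F i (i + 1) + F 0 i - F i i - F 0 (i + 1)
        - (F (i + 1) n + F i (i + 1) - F (i + 1) (i + 1) - F i n)
      = (F 0 i - F 0 (i + 1)) + (F (i + 1) (i + 1) - F i i) + (F i n - F (i + 1) n) :=
    fun i _ => by ring
  rw [Finset.sum_congr rfl hsplit, Finset.sum_add_distrib, Finset.sum_add_distrib,
    Finset.sum_range_sub' (F 0), Finset.sum_range_sub (fun i => F i i),
    Finset.sum_range_sub' (F · n)]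
  ring

section FinFamily

variable {n : ℕ} {γ β : Type*}

lemma Fin.forall_le_iff_and_forall_succ_le {P : Fin n → Prop} (i : Fin n) :
    (∀ j : Fin n, i.val ≤ j.val → P j) ↔ P i ∧ ∀ j : Fin n, i.val + 1 ≤ j.val → P j := by
  refine ⟨fun h => ⟨h i le_rfl, fun j hj => h j (by omega)⟩, fun ⟨hi, h⟩ j hj => ?_⟩
  rcases Nat.eq_or_lt_of_le hj with hij | hij
  · rwa [← Fin.ext hij]
  · exact h j hij

lemma Fin.forall_lt_succ_iff_and_forall_lt {P : Fin n → Prop} (i : Fin n) :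
    (∀ j : Fin n, j.val < i.val + 1 → P j) ↔ P i ∧ ∀ j : Fin n, j.val < i.val → P j := by
  refine ⟨fun h => ⟨h i (by omega), fun j hj => h j (by omega)⟩, fun ⟨hi, h⟩ j hj => ?_⟩
  rcases Nat.lt_succ_iff_lt_or_eq.1 hj with hij | hij
  · exact h j hij
  · rwa [Fin.ext hij]

variable (X : Fin n → γ → β) (x x' : γ)

lemma restrict_eq_restrict_iff (p : Fin n → Prop) :
    ((fun j : {j : Fin n // p j} => X j x) = fun j : {j : Fin n // p j} => X j x')
      ↔ ∀ j : Fin n, p j → X j x = X j x' :=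
  funext_iff.trans Subtype.forall

variable (i : Fin n)

lemma prefix_eq_prefix_iff :
    ((fun j : Fin i.val => X ⟨j.val, lt_trans j.isLt i.isLt⟩ x)
      = fun j : Fin i.val => X ⟨j.val, lt_trans j.isLt i.isLt⟩ x')
      ↔ ∀ j : Fin n, j.val < i.val → X j x = X j x' :=
  funext_iff.trans ⟨fun h j hj => h ⟨j.val, hj⟩, fun h j => h _ j.isLt⟩

lemma suffix_eq_suffix_iff :
    ((fun j : Fin (n - (i.val + 1)) =>
        X ⟨i.val + 1 + j.val, by have := i.isLt; have := j.isLt; omega⟩ x)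
      = fun j : Fin (n - (i.val + 1)) =>
        X ⟨i.val + 1 + j.val, by have := i.isLt; have := j.isLt; omega⟩ x')
      ↔ ∀ j : Fin n, i.val + 1 ≤ j.val → X j x = X j x' := by
  refine funext_iff.trans ⟨fun h j hj => ?_, fun h j => h _ (Nat.le_add_right _ _)⟩
  simpa only [Nat.add_sub_cancel' hj] using h ⟨j.val - (i.val + 1), by omega⟩

end FinFamily

section CsiszarKorner

variable {Ω σW σS σY : Type*} [Fintype Ω]
  [Fintype σW] [DecidableEq σW] [Fintype σS] [DecidableEq σS] [Fintype σY] [DecidableEq σY]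
  (μ : Ω → ℝ) {n : ℕ} (W : Ω → σW) (S : Fin n → Ω → σS) (Y : Fin n → Ω → σY)

noncomputable def prefixSuffixEntropy (a b : ℕ) : ℝ :=
  Hent μ fun ω => (W ω, (fun j : {j : Fin n // j.val < a} => S j ω),
    fun j : {j : Fin n // b ≤ j.val} => Y j ω)

lemma cmi_prefix_current_suffix (i : Fin n) :
    cmi μ (fun ω => fun j : Fin i.val => S ⟨j.val, lt_trans j.isLt i.isLt⟩ ω)
          (Y i)
          (fun ω => (W ω, fun j : Fin (n - (i.val + 1)) =>
            Y ⟨i.val + 1 + j.val, by have := i.isLt; have := j.isLt; omega⟩ ω))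
      = prefixSuffixEntropy μ W S Y i (i + 1) + prefixSuffixEntropy μ W S Y 0 i
        - prefixSuffixEntropy μ W S Y i i - prefixSuffixEntropy μ W S Y 0 (i + 1) := by
  unfold cmi prefixSuffixEntropy
  refine congrArg₂ (· - ·) (congrArg₂ (· - ·) (congrArg₂ (· + ·) ?_ ?_) ?_) ?_ <;>
    refine Hent_congr_of_fibers μ fun ω ω' => ?_ <;>
    simp only [Prod.mk.injEq, prefix_eq_prefix_iff, suffix_eq_suffix_iff, restrict_eq_restrict_iff,
      Fin.forall_le_iff_and_forall_succ_le, Nat.not_lt_zero,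
      IsEmpty.forall_iff, implies_true] <;>
    tauto

lemma cmi_current_suffix_prefix (i : Fin n) :
    cmi μ (S i)
          (fun ω => fun j : Fin (n - (i.val + 1)) =>
            Y ⟨i.val + 1 + j.val, by have := i.isLt; have := j.isLt; omega⟩ ω)
          (fun ω => (W ω, fun j : Fin i.val => S ⟨j.val, lt_trans j.isLt i.isLt⟩ ω))
      = prefixSuffixEntropy μ W S Y (i + 1) n + prefixSuffixEntropy μ W S Y i (i + 1)
        - prefixSuffixEntropy μ W S Y (i + 1) (i + 1) - prefixSuffixEntropy μ W S Y i n := by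
  unfold cmi prefixSuffixEntropy
  refine congrArg₂ (· - ·) (congrArg₂ (· - ·) (congrArg₂ (· + ·) ?_ ?_) ?_) ?_ <;>
    refine Hent_congr_of_fibers μ fun ω ω' => ?_ <;>
    simp only [Prod.mk.injEq, prefix_eq_prefix_iff, suffix_eq_suffix_iff, restrict_eq_restrict_iff,
      Fin.forall_lt_succ_iff_and_forall_lt,
      fun j : Fin n => not_le.2 j.isLt, false_imp_iff, implies_true, and_true] <;>
    tauto

end CsiszarKorner

/-- Csiszár–Körner sum identity. -/
theorem csiszar_korner_sum_identity {Ω σW σS σY : Type*} [Fintype Ω]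
    [Fintype σW] [DecidableEq σW] [Fintype σS] [DecidableEq σS] [Fintype σY] [DecidableEq σY]
    (μ : Ω → ℝ) (n : ℕ)
    (W : Ω → σW) (S : Fin n → Ω → σS) (Y : Fin n → Ω → σY) :
    (∑ i : Fin n,
      cmi μ (fun ω => fun j : Fin i.val => S ⟨j.val, lt_trans j.isLt i.isLt⟩ ω)
            (Y i)
            (fun ω => (W ω, fun j : Fin (n - (i.val + 1)) =>
              Y ⟨i.val + 1 + j.val, by have := j.isLt; have := i.isLt; omega⟩ ω)))
    = ∑ i : Fin n,
      cmi μ (S i)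
            (fun ω => fun j : Fin (n - (i.val + 1)) =>
              Y ⟨i.val + 1 + j.val, by have := j.isLt; have := i.isLt; omega⟩ ω)
            (fun ω => (W ω, fun j : Fin i.val => S ⟨j.val, lt_trans j.isLt i.isLt⟩ ω)) := by
  simpa only [cmi_prefix_current_suffix, cmi_current_suffix_prefix, Finset.sum_range] using
    sum_range_csiszar_korner_telescope (prefixSuffixEntropy μ W S Y) n
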